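/- arXiv:1305.4783 — 11 statements merged into one kernel-verified Lean document; each statement's English description precedes it below -/
import Mathlib

section
/- Let x1, ..., x_{n+1} be n+1 points in general position in ℝ^n (i.e., their affine span is ℝ^n), and let p_{i,i+1} be a point on the line through x_i and x_{i+1} distinct from both (indices mod n+1). Then the n+1 points p_{i,i+1} lie in a common affine hyperplane if and only if the product over i of the ratios of directed lengths l(x_i, p_{i,i+1}) / l(p_{i,i+1}, x_{i+1}) equals (-1)^{n+1}. -/
/-!
A hyperplane through the points `p i` is the zero set of a nonzero affine function `f`. As `p i`
divides the segment from `x i` to `x (i + 1)` in the ratio `t i` (and `1 + t i ≠ 0` because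
`x i ≠ x (i + 1)`), `f (p i) = 0` iff `f (x i) + t i * f (x (i + 1)) = 0`; and since the `x i`
form an affine basis, the values `b i = f (x i)` can be prescribed arbitrarily. So the question is
whether the cyclic system `b i = -t i * b (i + 1)` has a nonzero solution. Such a solution vanishes
nowhere, and multiplying the equations around the cycle gives `∏ i, -t i = 1`; conversely, if the
product is `1`, then `b i = ∏ j ≥ i, -t j` is a solution.
-/

open Finset

theorem Fin.forall_of_imp_add_one {n : ℕ} {P : Fin (n + 1) → Prop} (h : ∀ i, P i → P (i + 1))
    {i₀ : Fin (n + 1)} (h₀ : P i₀) (j : Fin (n + 1)) : P j := by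
  open Fin.NatCast in
  have h_iter : ∀ m : ℕ, P (i₀ + m) := by
    intro m
    induction m with
    | zero => simpa using h₀
    | succ m ih => simpa [add_assoc] using h _ ih
  simpa using h_iter (j - i₀).val

theorem Fin.prod_Ici_eq_mul_prod_Ici_add_one {M : Type*} [CommMonoid M] {n : ℕ}
    (f : Fin (n + 1) → M) {i : Fin (n + 1)} (hi : i ≠ Fin.last n) :
    ∏ j ∈ Ici i, f j = f i * ∏ j ∈ Ici (i + 1), f j := by
  rw [Ici_eq_cons_Ioi, Finset.prod_cons]
  congr 2
  ext j
  simp only [mem_Ioi, mem_Ici, Fin.lt_def, Fin.le_def,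
    Fin.val_add_one_of_lt (Fin.lt_last_iff_ne_last.2 hi)]
  omega

theorem exists_ne_zero_forall_add_mul_eq_zero_iff {R : Type*} [CommRing R] [IsDomain R] {n : ℕ}
    (t : Fin (n + 1) → R) :
    (∃ b : Fin (n + 1) → R, b ≠ 0 ∧ ∀ i, b i + t i * b (i + 1) = 0) ↔ ∏ i, -t i = 1 := by
  constructor
  · rintro ⟨b, hb₀, hb⟩
    have hb' : ∀ i, b i = -t i * b (i + 1) := fun i => by linear_combination hb i
    obtain ⟨i₀, hi₀⟩ := Function.ne_iff.mp hb₀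
    have hb_ne : ∀ i, b i ≠ 0 :=
      Fin.forall_of_imp_add_one (fun i hi h => hi (by rw [hb' i, h, mul_zero])) hi₀
    have hprod : ∏ i, b i = (∏ i, -t i) * ∏ i, b i := by
      calc ∏ i, b i = ∏ i, -t i * b (i + 1) := prod_congr rfl fun i _ => hb' i
        _ = (∏ i, -t i) * ∏ i, b (i + 1) := prod_mul_distrib
        _ = (∏ i, -t i) * ∏ i, b i := by
          rw [Fintype.prod_equiv (Equiv.addRight 1) (fun i => b (i + 1)) b fun _ => rfl]
    exact (mul_eq_right₀ (prod_ne_zero_iff.mpr fun i _ => hb_ne i)).mp hprod.symm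
  · intro ht
    refine ⟨fun i => ∏ j ∈ Ici i, -t j, Function.ne_iff.mpr ⟨0, ?_⟩, fun i => ?_⟩
    · simp [ht]
    · by_cases hi : i = Fin.last n
      · subst hi
        simp only [Fin.last_add_one]
        simp [ht, ← Fin.top_eq_last, Ici_top]
      · dsimp only
        rw [Fin.prod_Ici_eq_mul_prod_Ici_add_one _ hi]
        ring

section Affine

variable {k V P ι : Type*}

theorem affineIndependent_of_affineSpan_eq_top_of_card_eq_finrank_add_one [Field k]
    [AddCommGroup V] [Module k V] [AddTorsor V P] [FiniteDimensional k V] [Fintype ι]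
    {p : ι → P} (hp : affineSpan k (Set.range p) = ⊤)
    (hc : Fintype.card ι = Module.finrank k V + 1) :
    AffineIndependent k p := by
  rw [affineIndependent_iff_finrank_vectorSpan_eq k p hc,
    AffineSubspace.vectorSpan_eq_top_of_affineSpan_eq_top k V P hp, finrank_top]

variable [CommRing k] [AddCommGroup V] [Module k V] [AddTorsor V P]

theorem AffineMap.apply_eq_zero_iff_of_vsub_eq_smul_vsub (f : P →ᵃ[k] k) {x y p : P} {t : k}
    (ht : IsUnit (1 + t)) (h : p -ᵥ x = t • (y -ᵥ p)) : f p = 0 ↔ f x + t * f y = 0 := by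
  have hf : f p - f x = t * (f y - f p) := by
    simpa only [map_smul, f.linearMap_vsub, vsub_eq_sub, smul_eq_mul] using congrArg f.linear h
  have : f x + t * f y = (1 + t) * f p := by linear_combination -hf
  rw [this, ht.mul_right_eq_zero]

theorem exists_linearMap_ne_zero_forall_eq_iff [Nonempty ι] (q : ι → V) :
    (∃ (φ : V →ₗ[k] k) (c : k), φ ≠ 0 ∧ ∀ i, φ (q i) = c) ↔
      ∃ f : V →ᵃ[k] k, f ≠ 0 ∧ ∀ i, f (q i) = 0 := by
  constructor
  · rintro ⟨φ, c, hφ, hq⟩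
    refine ⟨φ.toAffineMap - AffineMap.const k V c, fun h => hφ ?_, fun i => by simp [hq i]⟩
    simpa using congrArg AffineMap.linear h
  · rintro ⟨f, hf, hq⟩
    have hf_apply : ∀ v, f v = f.linear v + f 0 := fun v => congrFun f.decomp v
    refine ⟨f.linear, -f 0, fun h => hf ?_, fun i => by linear_combination hq i - hf_apply (q i)⟩
    obtain ⟨i⟩ := ‹Nonempty ι›
    ext v
    have h0 : f 0 = 0 := by simpa [h] using (hf_apply (q i)).symm.trans (hq i)
    simp [hf_apply v, h, h0]

theorem AffineBasis.bijective_comp [Fintype ι] (b : AffineBasis ι k P) :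
    Function.Bijective fun f : P →ᵃ[k] k => ⇑f ∘ ⇑b := by
  classical
  refine ⟨fun f g hfg => AffineMap.ext_on b.tot ?_, fun v => ?_⟩
  · rintro - ⟨i, rfl⟩
    exact congrFun hfg i
  · refine ⟨(Fintype.linearCombination k v).toAffineMap.comp b.coords, funext fun j => ?_⟩
    simp [Fintype.linearCombination_apply, b.coord_apply]

theorem AffineBasis.exists_affineMap_ne_zero_comp_iff [Fintype ι] (b : AffineBasis ι k P)
    (Q : (ι → k) → Prop) :
    (∃ f : P →ᵃ[k] k, f ≠ 0 ∧ Q (⇑f ∘ ⇑b)) ↔ ∃ v : ι → k, v ≠ 0 ∧ Q v := by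
  rw [b.bijective_comp.surjective.exists]
  exact exists_congr fun f => and_congr_left' (b.bijective_comp.injective.ne_iff' rfl).symm

theorem one_add_ne_zero_of_vsub_eq_smul_vsub {x y p : P} {t : k} (hxy : x ≠ y)
    (h : p -ᵥ x = t • (y -ᵥ p)) : 1 + t ≠ 0 := by
  intro ht
  rw [show t = -1 by linear_combination ht, neg_one_smul, neg_vsub_eq_vsub_rev] at h
  exact hxy (vsub_right_cancel_iff.mp h)

end Affine

theorem menelaus_generalized_general (n : ℕ) (hn : 1 ≤ n)
    (x p : Fin (n + 1) → (Fin n → ℝ))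
    (hgen : affineSpan ℝ (Set.range x) = ⊤)
    (t : Fin (n + 1) → ℝ)
    (ht : ∀ i, p i - x i = t i • (x (i + 1) - p i)) :
    (∃ (φ : (Fin n → ℝ) →ₗ[ℝ] ℝ) (c : ℝ), φ ≠ 0 ∧ ∀ i, φ (p i) = c) ↔
      (∏ i, t i) = (-1 : ℝ) ^ (n + 1) := by
  let B : AffineBasis (Fin (n + 1)) ℝ (Fin n → ℝ) :=
    ⟨x, affineIndependent_of_affineSpan_eq_top_of_card_eq_finrank_add_one hgen (by simp), hgen⟩
  have : NeZero n := ⟨by omega⟩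
  have hunit : ∀ i, IsUnit (1 + t i) := fun i => isUnit_iff_ne_zero.mpr <|
    one_add_ne_zero_of_vsub_eq_smul_vsub
      (B.ind.injective.ne (left_ne_add.mpr Fin.zero_ne_one'.symm)) (ht i)
  rw [exists_linearMap_ne_zero_forall_eq_iff]
  calc (∃ f : (Fin n → ℝ) →ᵃ[ℝ] ℝ, f ≠ 0 ∧ ∀ i, f (p i) = 0)
      ↔ ∃ f : (Fin n → ℝ) →ᵃ[ℝ] ℝ, f ≠ 0 ∧ ∀ i, (⇑f ∘ ⇑B) i + t i * (⇑f ∘ ⇑B) (i + 1) = 0 :=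
        exists_congr fun f => and_congr_right' <| forall_congr' fun i =>
          f.apply_eq_zero_iff_of_vsub_eq_smul_vsub (hunit i) (ht i)
    _ ↔ ∃ v : Fin (n + 1) → ℝ, v ≠ 0 ∧ ∀ i, v i + t i * v (i + 1) = 0 :=
        B.exists_affineMap_ne_zero_comp_iff fun v => ∀ i, v i + t i * v (i + 1) = 0
    _ ↔ ∏ i, -t i = 1 := exists_ne_zero_forall_add_mul_eq_zero_iff t
    _ ↔ (∏ i, t i) = (-1 : ℝ) ^ (n + 1) := by
        rw [prod_neg, card_univ, Fintype.card_fin, mul_comm,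
          mul_eq_one_iff_eq_inv₀ (by simp), ← inv_pow, inv_neg_one]

/-- Generalized Menelaus theorem: n+1 points in general position in ℝⁿ,
with a point on each (cyclically consecutive) connecting line; the chosen points
lie in a common affine hyperplane iff the product of the ratios of directed
lengths equals (-1)^(n+1). -/
theorem menelaus_generalized (n : ℕ) (hn : 1 ≤ n)
    (x p : Fin (n + 1) → (Fin n → ℝ))
    (hgen : affineSpan ℝ (Set.range x) = ⊤)
    (hline : ∀ i : Fin (n + 1), ∃ s : ℝ, p i = x i + s • (x (i + 1) - x i))
    (hpx : ∀ i, p i ≠ x i) (hpx' : ∀ i, p i ≠ x (i + 1))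
    (t : Fin (n + 1) → ℝ)
    (ht : ∀ i, p i - x i = t i • (x (i + 1) - p i)) :
    (∃ (φ : (Fin n → ℝ) →ₗ[ℝ] ℝ) (c : ℝ), φ ≠ 0 ∧ ∀ i, φ (p i) = c) ↔
      (∏ i, t i) = (-1 : ℝ) ^ (n + 1) :=
  menelaus_generalized_general n hn x p hgen t ht
end

section
/- Let x1, x2, x3, x4 ∈ ℝ^3 be the vertices of a skew quadrilateral and let ρ1, ρ2, ρ3, ρ4 be nonzero reals with ρ1+ρ2, ρ2+ρ3, ρ3+ρ4, ρ4+ρ1 nonzero. Define p12 = (ρ1 x1 + ρ2 x2)/(ρ1+ρ2), p23 = (ρ2 x2 + ρ3 x3)/(ρ2+ρ3), p34 = (ρ3 x3 + ρ4 x4)/(ρ3+ρ4), p41 = (ρ4 x4 + ρ1 x1)/(ρ4+ρ1). Then the four points p12, p23, p34, p41 are coplanar (lie in a common affine plane). -/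
/-!
Clearing denominators, `(ρ1+ρ2) p12 - (ρ2+ρ3) p23 + (ρ3+ρ4) p34 - (ρ4+ρ1) p41 = 0`, since each
`ρᵢ xᵢ` occurs once with each sign. The coefficients sum to zero and the first is nonzero, so this is
a nontrivial affine dependence, which puts `p12` in the plane spanned by the other three points.
-/

theorem coplanar_of_weighted_sum_eq_zero {k V : Type*} [Field k] [AddCommGroup V] [Module k V]
    {p q r s : V} {a b c d : k} (ha : a ≠ 0) (hw : a + b + c + d = 0)
    (hv : a • p + b • q + c • r + d • s = 0) : Coplanar k ({p, q, r, s} : Set V) := by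
  have hq : q ∈ affineSpan k {q, r, s} := subset_affineSpan k _ (by simp)
  have hr : r ∈ affineSpan k {q, r, s} := subset_affineSpan k _ (by simp)
  have hs : s ∈ affineSpan k {q, r, s} := subset_affineSpan k _ (by simp)
  have hp : p = (-b / a) • (q -ᵥ s) +ᵥ ((-c / a) • (r -ᵥ s) +ᵥ s) := by
    obtain rfl : d = -(a + b + c) := by linear_combination hw
    apply smul_right_injective V ha
    simp only [vsub_eq_sub, vadd_eq_add]
    linear_combination (norm := match_scalars) hv
    all_goals field_simp
    all_goals ring
  have hmem : p ∈ affineSpan k {q, r, s} := hp ▸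
    AffineSubspace.smul_vsub_vadd_mem _ _ hq hs (AffineSubspace.smul_vsub_vadd_mem _ _ hr hs hs)
  exact (coplanar_insert_iff_of_mem_affineSpan hmem).2 (coplanar_triple k q r s)

theorem cross_vertices_coplanar_general
    (x1 x2 x3 x4 : Fin 3 → ℝ)
    (ρ1 ρ2 ρ3 ρ4 : ℝ)
    (h12 : ρ1 + ρ2 ≠ 0) (h23 : ρ2 + ρ3 ≠ 0) (h34 : ρ3 + ρ4 ≠ 0) (h41 : ρ4 + ρ1 ≠ 0)
    (p12 p23 p34 p41 : Fin 3 → ℝ)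
    (hp12 : p12 = (ρ1 + ρ2)⁻¹ • (ρ1 • x1 + ρ2 • x2))
    (hp23 : p23 = (ρ2 + ρ3)⁻¹ • (ρ2 • x2 + ρ3 • x3))
    (hp34 : p34 = (ρ3 + ρ4)⁻¹ • (ρ3 • x3 + ρ4 • x4))
    (hp41 : p41 = (ρ4 + ρ1)⁻¹ • (ρ4 • x4 + ρ1 • x1)) :
    Coplanar ℝ ({p12, p23, p34, p41} : Set (Fin 3 → ℝ)) := by
  have e12 : (ρ1 + ρ2) • p12 = ρ1 • x1 + ρ2 • x2 := by rw [hp12, smul_inv_smul₀ h12]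
  have e23 : (ρ2 + ρ3) • p23 = ρ2 • x2 + ρ3 • x3 := by rw [hp23, smul_inv_smul₀ h23]
  have e34 : (ρ3 + ρ4) • p34 = ρ3 • x3 + ρ4 • x4 := by rw [hp34, smul_inv_smul₀ h34]
  have e41 : (ρ4 + ρ1) • p41 = ρ4 • x4 + ρ1 • x1 := by rw [hp41, smul_inv_smul₀ h41]
  refine coplanar_of_weighted_sum_eq_zero (b := -(ρ2 + ρ3)) (c := ρ3 + ρ4) (d := -(ρ4 + ρ1))
    h12 (by ring) ?_
  linear_combination (norm := module) e12 - e23 + e34 - e41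

/-- The four cross vertices determined by scalars ρᵢ on the edges of a skew
quadrilateral are coplanar. -/
theorem cross_vertices_coplanar
    (x1 x2 x3 x4 : Fin 3 → ℝ)
    (hskew : ¬ Coplanar ℝ ({x1, x2, x3, x4} : Set (Fin 3 → ℝ)))
    (ρ1 ρ2 ρ3 ρ4 : ℝ)
    (h1 : ρ1 ≠ 0) (h2 : ρ2 ≠ 0) (h3 : ρ3 ≠ 0) (h4 : ρ4 ≠ 0)
    (h12 : ρ1 + ρ2 ≠ 0) (h23 : ρ2 + ρ3 ≠ 0) (h34 : ρ3 + ρ4 ≠ 0) (h41 : ρ4 + ρ1 ≠ 0)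
    (p12 p23 p34 p41 : Fin 3 → ℝ)
    (hp12 : p12 = (ρ1 + ρ2)⁻¹ • (ρ1 • x1 + ρ2 • x2))
    (hp23 : p23 = (ρ2 + ρ3)⁻¹ • (ρ2 • x2 + ρ3 • x3))
    (hp34 : p34 = (ρ3 + ρ4)⁻¹ • (ρ3 • x3 + ρ4 • x4))
    (hp41 : p41 = (ρ4 + ρ1)⁻¹ • (ρ4 • x4 + ρ1 • x1)) :
    Coplanar ℝ ({p12, p23, p34, p41} : Set (Fin 3 → ℝ)) :=
  cross_vertices_coplanar_general x1 x2 x3 x4 ρ1 ρ2 ρ3 ρ4 h12 h23 h34 h41 p12 p23 p34 p41 hp12 hp23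
    hp34 hp41
end

section
/- Let n : ℤ² → ℝ³ and α¹, α² : ℤ² → ℝ be such that the discrete one-form ω(z, i) = α^i(z) (n_i(z) × n(z)) is exact (i.e., there exists x : ℤ² → ℝ³ with x_i − x = α^i n_i × n for i = 1,2). Assume the vectors n, n₁, n₂, n₁₂ at each z are such that n₁ × n, n₂ × n, and n₁₂ × n₁, n₁₂ × n₂ are linearly independent where needed (genericity). Then the compatibility condition (x₁)₂ = (x₂)₁ implies α¹ α¹₂ = α² α²₁ at every point of ℤ². -/
/-!
Going around the elementary square from `z` to `z + (1, 1)` both ways gives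
`α¹ (n₁ × n) + α²₁ (n₁₂ × n₁) = α² (n₂ × n) + α¹₂ (n₁₂ × n₂)`.
Dotting with `n₁₂` and with `n` kills two terms each time and leaves
`α¹ [n, n₁, n₁₂] = α² [n, n₂, n₁₂]` and `α²₁ [n, n₁, n₁₂] = α¹₂ [n, n₂, n₁₂]`;
the triple products are nonzero by genericity, so cross-multiplying the two relations gives the claim.
-/

open Matrix

theorem dotProduct_cross_ne_zero_of_linearIndependent {K : Type*} [Field K] {u v w : Fin 3 → K}
    (h : LinearIndependent K ![u, v, w]) : u ⬝ᵥ v ⨯₃ w ≠ 0 := by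
  rw [triple_product_eq_det, ← isUnit_iff_ne_zero]
  exact (isUnit_iff_isUnit_det (of ![u, v, w])).mp (linearIndependent_rows_iff_isUnit.mp h)

theorem mul_eq_mul_of_smul_cross_add_smul_cross_eq {K : Type*} [Field K]
    {u p q a : Fin 3 → K} {α β γ δ : K}
    (hp : u ⬝ᵥ p ⨯₃ a ≠ 0) (hq : u ⬝ᵥ q ⨯₃ a ≠ 0)
    (h : α • p ⨯₃ u + β • a ⨯₃ p = γ • q ⨯₃ u + δ • a ⨯₃ q) :
    α * δ = γ * β := by
  have dot_a : α * (u ⬝ᵥ p ⨯₃ a) = γ * (u ⬝ᵥ q ⨯₃ a) := by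
    have := congrArg (a ⬝ᵥ ·) h
    simp only [dotProduct_add, dotProduct_smul, smul_eq_mul, dot_self_cross, mul_zero,
      add_zero] at this
    rw [← cross_anticomm u p, ← cross_anticomm u q, dotProduct_neg, dotProduct_neg,
      triple_product_permutation a, triple_product_permutation a] at this
    simpa only [mul_neg, neg_inj] using this
  have dot_u : β * (u ⬝ᵥ p ⨯₃ a) = δ * (u ⬝ᵥ q ⨯₃ a) := by
    have := congrArg (u ⬝ᵥ ·) h
    simp only [dotProduct_add, dotProduct_smul, smul_eq_mul, dot_cross_self, mul_zero,
      zero_add] at this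
    rw [← cross_anticomm p, ← cross_anticomm q] at this
    simpa only [dotProduct_neg, mul_neg, neg_inj] using this
  apply mul_right_cancel₀ (mul_ne_zero hp hq)
  linear_combination (δ * u ⬝ᵥ q ⨯₃ a) * dot_a - (γ * u ⬝ᵥ q ⨯₃ a) * dot_u

/-- Compatibility of the pre-Lelieuvre representation: exactness of the
discrete one-form α^i (n_i × n) implies α¹ α¹₂ = α² α²₁. -/
theorem pre_lelieuvre_compatibility
    (n x : ℤ × ℤ → Fin 3 → ℝ) (α1 α2 : ℤ × ℤ → ℝ)
    (hx1 : ∀ z : ℤ × ℤ, x (z + (1, 0)) - x z = α1 z • crossProduct (n (z + (1, 0))) (n z))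
    (hx2 : ∀ z : ℤ × ℤ, x (z + (0, 1)) - x z = α2 z • crossProduct (n (z + (0, 1))) (n z))
    (hgen1 : ∀ z : ℤ × ℤ, LinearIndependent ℝ ![n z, n (z + (1, 0)), n (z + (1, 1))])
    (hgen2 : ∀ z : ℤ × ℤ, LinearIndependent ℝ ![n z, n (z + (0, 1)), n (z + (1, 1))]) :
    ∀ z : ℤ × ℤ, α1 z * α1 (z + (0, 1)) = α2 z * α2 (z + (1, 0)) := by
  intro z
  have h12 : z + (1, 0) + (0, 1) = z + (1, 1) := by rw [add_assoc]; rfl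
  have h21 : z + (0, 1) + (1, 0) = z + (1, 1) := by rw [add_assoc]; rfl
  have square_closes :
      α1 z • n (z + (1, 0)) ⨯₃ n z + α2 (z + (1, 0)) • n (z + (1, 1)) ⨯₃ n (z + (1, 0)) =
        α2 z • n (z + (0, 1)) ⨯₃ n z + α1 (z + (0, 1)) • n (z + (1, 1)) ⨯₃ n (z + (0, 1)) := by
    calc _ = (x (z + (1, 0)) - x z) + (x (z + (1, 1)) - x (z + (1, 0))) := by
          rw [hx1, ← h12, hx2]
      _ = (x (z + (0, 1)) - x z) + (x (z + (1, 1)) - x (z + (0, 1))) := by abel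
      _ = _ := by rw [hx2, ← h21, hx1]
  exact mul_eq_mul_of_smul_cross_add_smul_cross_eq
    (dotProduct_cross_ne_zero_of_linearIndependent (hgen1 z))
    (dotProduct_cross_ne_zero_of_linearIndependent (hgen2 z)) square_closes
end

section
/- Let α¹, α² : ℤ² → ℝ be nowhere-zero functions satisfying α¹ α¹₂ = α² α²₁ on ℤ². Then there exists a nowhere-zero function ξ : ℤ² → ℝ such that α^i = ξ_i ξ for i = 1, 2 (where ξ_i denotes the shift of ξ in direction i). -/
/-!
Taking values in the group `ℝˣ`, the condition `α¹ = ξ₁ ξ` determines `ξ` along the row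
`ℤ × {0}` from `ξ (0, 0) = 1`, and `α² = ξ₂ ξ` then extends it up and down each column.
The relation `α¹ = ξ₁ ξ` off the base row propagates from one row to the next because the
compatibility condition `α¹ α¹₂ = α² α²₁` expresses `α¹₂` as `α² α²₁ / α¹`, which is exactly
how `ξ₁₂ ξ₂` is obtained from `ξ₁ ξ` one row below.
-/

namespace Int

variable {β : Type*}

def equivRecurrence (f : ℤ → β ≃ β) (t : β) : ℤ → β
  | ofNat k => Nat.rec t (fun k y => f k y) k
  | negSucc k => Nat.rec ((f (-1)).symm t) (fun k y => (f (negSucc (k + 1))).symm y) k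

theorem equivRecurrence_zero (f : ℤ → β ≃ β) (t : β) : equivRecurrence f t 0 = t := rfl

theorem equivRecurrence_succ (f : ℤ → β ≃ β) (t : β) (n : ℤ) :
    equivRecurrence f t (n + 1) = f n (equivRecurrence f t n) := by
  rcases n with k | _ | k
  · rfl
  · exact ((f (-1)).apply_symm_apply t).symm
  · exact ((f (negSucc (k + 1))).apply_symm_apply _).symm

theorem forall_of_iff_succ {p : ℤ → Prop} (h0 : p 0) (hsucc : ∀ n, p n ↔ p (n + 1)) :
    ∀ n, p n := by
  intro n
  induction n using Int.induction_on with
  | zero => exact h0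
  | succ n ih => exact (hsucc n).1 ih
  | pred n ih => exact (hsucc (-n - 1)).2 (by simpa using ih)

end Int

section CommGroup

variable {G : Type*} [CommGroup G]

theorem exists_mul_succ_eq (a : ℤ → G) (t : G) :
    ∃ x : ℤ → G, x 0 = t ∧ ∀ n, a n = x (n + 1) * x n := by
  refine ⟨Int.equivRecurrence (fun n => (Equiv.inv G).trans (Equiv.mulRight (a n))) t,
    Int.equivRecurrence_zero _ _, fun n => ?_⟩
  simp [Int.equivRecurrence_succ]

theorem exists_potential_of_mul_shift_eq (α1 α2 : ℤ × ℤ → G)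
    (hcompat : ∀ z : ℤ × ℤ, α1 z * α1 (z + (0, 1)) = α2 z * α2 (z + (1, 0))) :
    ∃ ξ : ℤ × ℤ → G, (∀ z, α1 z = ξ (z + (1, 0)) * ξ z) ∧
      (∀ z, α2 z = ξ (z + (0, 1)) * ξ z) := by
  obtain ⟨row, -, hrow⟩ := exists_mul_succ_eq (fun m => α1 (m, 0)) 1
  choose col hcol0 hcol using fun m => exists_mul_succ_eq (fun n => α2 (m, n)) (row m)
  have hcol' (m n : ℤ) : col m (n + 1) = (col m n)⁻¹ * α2 (m, n) :=
    eq_inv_mul_of_mul_eq ((mul_comm _ _).trans (hcol m n).symm)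
  have hα1 (m n : ℤ) : α1 (m, n + 1) = (α1 (m, n))⁻¹ * (α2 (m, n) * α2 (m + 1, n)) :=
    eq_inv_mul_of_mul_eq (by simpa using hcompat (m, n))
  have hrows (m : ℤ) : ∀ n, α1 (m, n) = col (m + 1) n * col m n := by
    refine Int.forall_of_iff_succ (by simpa [hcol0] using hrow m) fun n => ?_
    have hprod : col (m + 1) (n + 1) * col m (n + 1) =
        (col (m + 1) n * col m n)⁻¹ * (α2 (m, n) * α2 (m + 1, n)) := by
      rw [hcol', hcol', mul_inv]
      ac_rfl
    rw [hα1, hprod, mul_left_inj, inv_inj]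
  refine ⟨fun z => col z.1 z.2, fun z => ?_, fun z => ?_⟩
  · simpa using hrows z.1 z.2
  · simpa using hcol z.1 z.2

end CommGroup

/-- Existence of a potential ξ with α^i = ξ_i ξ for nowhere-zero α¹, α²
satisfying the compatibility condition α¹ α¹₂ = α² α²₁. -/
theorem lelieuvre_potential_exists
    (α1 α2 : ℤ × ℤ → ℝ) (h1 : ∀ z, α1 z ≠ 0) (h2 : ∀ z, α2 z ≠ 0)
    (hcompat : ∀ z : ℤ × ℤ, α1 z * α1 (z + (0, 1)) = α2 z * α2 (z + (1, 0))) :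
    ∃ ξ : ℤ × ℤ → ℝ, (∀ z, ξ z ≠ 0) ∧
      (∀ z, α1 z = ξ (z + (1, 0)) * ξ z) ∧
      (∀ z, α2 z = ξ (z + (0, 1)) * ξ z) := by
  obtain ⟨ξ, hξ1, hξ2⟩ := exists_potential_of_mul_shift_eq
    (fun z => Units.mk0 (α1 z) (h1 z)) (fun z => Units.mk0 (α2 z) (h2 z))
    fun z => Units.ext (hcompat z)
  exact ⟨fun z => ξ z, fun z => (ξ z).ne_zero, fun z => congrArg Units.val (hξ1 z),
    fun z => congrArg Units.val (hξ2 z)⟩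
end

section
/- Let n : ℤ² → ℝ³ satisfy the discrete Moutard equation n₁₂ − n = a (n₂ − n₁) for a function a : ℤ² → ℝ, and define edge vectors by the discrete Lelieuvre formulae x_i − x = n_i × n, i = 1, 2. Then the closure condition around each elementary quadrilateral holds: (n₁₂ × n₁) + (n₁ × n) = (n₁₂ × n₂) + (n₂ × n), i.e., (x₁)₂ − x computed via direction 1 then 2 equals that computed via direction 2 then 1, so a consistent x : ℤ² → ℝ³ exists (unique up to translation). -/
/-!
The Moutard equation says that `n₁₂ - n` is parallel to `n₂ - n₁`, so
`(n₁₂ - n) × (n₁ - n₂) = 0`; expanding, this is exactly the closure of the Lelieuvre edge vectors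
around the quadrilateral. A closed discrete 1-form on `ℤ²` is exact: integrate it along the axis
`q = 0` and then along each column. Two potentials differ by a function invariant under both unit
shifts, hence by a constant.
-/

open Finset Function Matrix

section CrossProduct

variable {R : Type*} [CommRing R]

lemma cross_add_cross_eq_sub_cross (u v w : Fin 3 → R) :
    u ⨯₃ v + v ⨯₃ w = (u - w) ⨯₃ v := by
  rw [map_sub, LinearMap.sub_apply, ← cross_anticomm w v, sub_eq_add_neg]

lemma cross_add_cross_eq_of_sub_eq_smul_sub {u v₁ v₂ w : Fin 3 → R} {a : R}
    (h : u - w = a • (v₂ - v₁)) :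
    u ⨯₃ v₁ + v₁ ⨯₃ w = u ⨯₃ v₂ + v₂ ⨯₃ w := by
  rw [cross_add_cross_eq_sub_cross, cross_add_cross_eq_sub_cross, h, ← sub_eq_zero,
    ← map_sub]
  simp only [map_smul, LinearMap.smul_apply, ← neg_sub v₂ v₁, map_neg, cross_self, neg_zero,
    smul_zero]

end CrossProduct

lemma eq_apply_zero_of_periodic {β : Type*} {d : ℤ × ℤ → β} (h₁ : Periodic d (1, 0))
    (h₂ : Periodic d (0, 1)) (z : ℤ × ℤ) : d z = d 0 := by
  have hz : z = z.2 • ((0, 1) : ℤ × ℤ) + z.1 • (1, 0) := by ext <;> simp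
  rw [hz, h₁.zsmul z.1, h₂.zsmul_eq]

section Potential

variable {M : Type*} [AddCommGroup M]

lemma Int.exists_primitive (g : ℤ → M) : ∃ f : ℤ → M, f 0 = 0 ∧ ∀ k, f (k + 1) - f k = g k := by
  refine ⟨fun k => ∑ i ∈ Ico 0 k, g i - ∑ i ∈ Ico k 0, g i, by simp, fun k => ?_⟩
  dsimp only
  rcases le_or_gt 0 k with hk | hk
  · rw [← insert_Ico_right_eq_Ico_add_one hk, sum_insert (by simp), Ico_eq_empty_of_le hk,
      Ico_eq_empty_of_le (by omega : 0 ≤ k + 1)]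
    abel
  · rw [← insert_Ico_add_one_left_eq_Ico hk, sum_insert (by simp), Ico_eq_empty_of_le hk.le,
      Ico_eq_empty_of_le (by omega : k + 1 ≤ 0)]
    abel

def HasDifferences (x e g : ℤ × ℤ → M) : Prop :=
  (∀ z, x (z + (1, 0)) - x z = e z) ∧ (∀ z, x (z + (0, 1)) - x z = g z)

lemma HasDifferences.exists_eq_add_const {x x' e g : ℤ × ℤ → M} (hx : HasDifferences x e g)
    (hx' : HasDifferences x' e g) : ∃ c, ∀ z, x' z = x z + c := by
  refine ⟨x' 0 - x 0, fun z => ?_⟩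
  have hd := eq_apply_zero_of_periodic (d := x' - x) (fun z => ?_) (fun z => ?_) z
  · simpa [sub_eq_iff_eq_add'] using hd
  · simpa [sub_eq_sub_iff_sub_eq_sub] using (hx'.1 z).trans (hx.1 z).symm
  · simpa [sub_eq_sub_iff_sub_eq_sub] using (hx'.2 z).trans (hx.2 z).symm

lemma exists_hasDifferences {e g : ℤ × ℤ → M}
    (h : ∀ z, e z + g (z + (1, 0)) = g z + e (z + (0, 1))) : ∃ x, HasDifferences x e g := by
  obtain ⟨F, -, hF⟩ := Int.exists_primitive fun p => e (p, 0)
  choose G hG₀ hG using fun p => Int.exists_primitive fun q => g (p, q)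
  -- Closedness makes `G (p + 1) q - G p q - e (p, q)` independent of `q`.
  refine ⟨fun z => F z.1 + G z.1 z.2, fun ⟨p, q⟩ => ?_, fun ⟨p, q⟩ => ?_⟩
  · have hper : Periodic (fun k => G (p + 1) k - G p k - e (p, k)) 1 := fun k => by
      have hk := h (p, k)
      simp only [Prod.mk_add_mk, add_zero] at hk
      dsimp only
      linear_combination (norm := abel) hG (p + 1) k - hG p k + hk
    have hq := hper.zsmul_eq q
    simp only [smul_eq_mul, mul_one, hG₀, sub_self, zero_sub] at hq
    simp only [Prod.mk_add_mk, add_zero]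
    linear_combination (norm := abel) hF p + hq
  · simpa using hG p q

end Potential

/-- The discrete Moutard equation implies the closure condition for the
discrete Lelieuvre formulae, so a consistent A-surface x exists, unique up to
translation. -/
theorem moutard_closure
    (n : ℤ × ℤ → Fin 3 → ℝ) (a : ℤ × ℤ → ℝ)
    (hm : ∀ z : ℤ × ℤ,
      n (z + (1, 1)) - n z = a z • (n (z + (0, 1)) - n (z + (1, 0)))) :
    (∀ z : ℤ × ℤ,
        crossProduct (n (z + (1, 1))) (n (z + (1, 0))) + crossProduct (n (z + (1, 0))) (n z)
          = crossProduct (n (z + (1, 1))) (n (z + (0, 1))) + crossProduct (n (z + (0, 1))) (n z)) ∧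
    (∃ x : ℤ × ℤ → Fin 3 → ℝ,
        (∀ z, x (z + (1, 0)) - x z = crossProduct (n (z + (1, 0))) (n z)) ∧
        (∀ z, x (z + (0, 1)) - x z = crossProduct (n (z + (0, 1))) (n z))) ∧
    (∀ x x' : ℤ × ℤ → Fin 3 → ℝ,
        ((∀ z, x (z + (1, 0)) - x z = crossProduct (n (z + (1, 0))) (n z)) ∧
          (∀ z, x (z + (0, 1)) - x z = crossProduct (n (z + (0, 1))) (n z))) →
        ((∀ z, x' (z + (1, 0)) - x' z = crossProduct (n (z + (1, 0))) (n z)) ∧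
          (∀ z, x' (z + (0, 1)) - x' z = crossProduct (n (z + (0, 1))) (n z))) →
        ∃ c : Fin 3 → ℝ, ∀ z, x' z = x z + c) := by
  have closure z := cross_add_cross_eq_of_sub_eq_smul_sub (hm z)
  refine ⟨closure, exists_hasDifferences fun z => ?_, fun x x' => HasDifferences.exists_eq_add_const⟩
  have hdiag₁ (w : ℤ × ℤ) : w + (1, 1) = w + (0, 1) + (1, 0) := by rw [add_assoc]; rfl
  have hdiag₂ (w : ℤ × ℤ) : w + (1, 1) = w + (1, 0) + (0, 1) := by rw [add_assoc]; rfl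
  rw [← hdiag₁, ← hdiag₂, add_comm, closure z, add_comm]
end

section
/- Let τ : ℤ³ → ℝ be nowhere-zero and define a^{ij} = τ_i τ_j / (τ τ_{ij}) for i < j (and a^{ji} = −a^{ij}). Then the system a^{ij}_k = − a^{ij} / (a^{ij} a^{jk} + a^{jk} a^{ki} + a^{ki} a^{ij}) (for pairwise distinct i,j,k in {1,2,3}) holds if and only if τ satisfies the discrete BKP (Miwa) equation τ τ₁₂₃ − τ₁ τ₂₃ + τ₂ τ₁₃ − τ₃ τ₁₂ = 0, assuming all denominators involved are nonzero. -/
/-!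
Write `D` for the cyclic sum `a^{ij} a^{jk} + a^{jk} a^{ki} + a^{ki} a^{ij}`; by skew-symmetry it
does not depend on the ordering of `i, j, k`. Substituting the τ-parametrization gives
`D = τ₁τ₂τ₃ (M - ττ₁₂₃) / (τ² τ₁₂τ₁₃τ₂₃)`, where `M` is the Miwa expression, and hence
`a^{ij}_k · D = a^{ij} (M - ττ₁₂₃) / (ττ₁₂₃)` for each of the three pairs `i < j`.
So every equation of the system is equivalent to `M = 0`. When `D = 0` both sides are false:
the equation because `a^{ij}_k ≠ 0`, and `M = 0` because then `M = ττ₁₂₃ ≠ 0`.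
-/

lemma cyclicSum_eq_of_skew {R X : Type*} [CommRing R] {a : Fin 3 → Fin 3 → X → R}
    (hskew : ∀ i j z, a j i z = -a i j z) {i j k : Fin 3} (hij : i ≠ j) (hjk : j ≠ k)
    (hik : i ≠ k) (z : X) :
    a i j z * a j k z + a j k z * a k i z + a k i z * a i j z
      = a 0 1 z * a 1 2 z + a 1 2 z * a 2 0 z + a 2 0 z * a 0 1 z := by
  obtain ⟨rfl, rfl, rfl⟩ | ⟨rfl, rfl, rfl⟩ | ⟨rfl, rfl, rfl⟩ | ⟨rfl, rfl, rfl⟩ | ⟨rfl, rfl, rfl⟩ |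
      ⟨rfl, rfl, rfl⟩ :
      (i = 0 ∧ j = 1 ∧ k = 2) ∨ (i = 0 ∧ j = 2 ∧ k = 1) ∨ (i = 1 ∧ j = 0 ∧ k = 2) ∨
        (i = 1 ∧ j = 2 ∧ k = 0) ∨ (i = 2 ∧ j = 0 ∧ k = 1) ∨ (i = 2 ∧ j = 1 ∧ k = 0) := by
    omega
  all_goals simp only [hskew 0 1, hskew 0 2, hskew 1 2] <;> ring

lemma eq_neg_div_iff_of_cube {K : Type*} [Field K] {A A' D M t ti tj tk tij tik tjk tijk : K}
    (ht : t ≠ 0) (hi : ti ≠ 0) (hj : tj ≠ 0) (hk : tk ≠ 0) (hij : tij ≠ 0) (hik : tik ≠ 0)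
    (hjk : tjk ≠ 0) (hijk : tijk ≠ 0) (hA : A = ti * tj / (t * tij))
    (hA' : A' = tik * tjk / (tk * tijk))
    (hD : D = ti * tj * tk * (M - t * tijk) / (t ^ 2 * tij * tik * tjk)) :
    A' = -A / D ↔ M = 0 := by
  subst hA hA' hD
  obtain ⟨N, rfl⟩ : ∃ N, M = t * tijk + N := ⟨M - t * tijk, by ring⟩
  rw [add_sub_cancel_left]
  rcases eq_or_ne N 0 with rfl | hN
  · simp [*]
  · field_simp
    constructor <;> intro h <;> linear_combination h

def miwa (τ : (Fin 3 → ℤ) → ℝ) (z : Fin 3 → ℤ) : ℝ :=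
  τ z * τ (z + Pi.single 0 1 + Pi.single 1 1 + Pi.single 2 1)
    - τ (z + Pi.single 0 1) * τ (z + Pi.single 1 1 + Pi.single 2 1)
    + τ (z + Pi.single 1 1) * τ (z + Pi.single 0 1 + Pi.single 2 1)
    - τ (z + Pi.single 2 1) * τ (z + Pi.single 0 1 + Pi.single 1 1)

section TauParametrization

variable {τ : (Fin 3 → ℤ) → ℝ} {a : Fin 3 → Fin 3 → (Fin 3 → ℤ) → ℝ}

lemma cyclicSum_eq_miwa (hτ : ∀ z, τ z ≠ 0)
    (ha : ∀ (i j : Fin 3), i < j → ∀ z,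
      a i j z = τ (z + Pi.single i 1) * τ (z + Pi.single j 1)
        / (τ z * τ (z + Pi.single i 1 + Pi.single j 1)))
    (hskew : ∀ i j z, a j i z = -a i j z) (z : Fin 3 → ℤ) :
    a 0 1 z * a 1 2 z + a 1 2 z * a 2 0 z + a 2 0 z * a 0 1 z
      = τ (z + Pi.single 0 1) * τ (z + Pi.single 1 1) * τ (z + Pi.single 2 1)
          * (miwa τ z - τ z * τ (z + Pi.single 0 1 + Pi.single 1 1 + Pi.single 2 1))
        / (τ z ^ 2 * τ (z + Pi.single 0 1 + Pi.single 1 1)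
          * τ (z + Pi.single 0 1 + Pi.single 2 1) * τ (z + Pi.single 1 1 + Pi.single 2 1)) := by
  rw [hskew 0 2, ha 0 1 (by decide), ha 0 2 (by decide), ha 1 2 (by decide), miwa]
  have := hτ z
  have := hτ (z + Pi.single 0 1 + Pi.single 1 1)
  have := hτ (z + Pi.single 0 1 + Pi.single 2 1)
  have := hτ (z + Pi.single 1 1 + Pi.single 2 1)
  field_simp
  ring

lemma shift_eq_neg_div_iff_miwa (hτ : ∀ z, τ z ≠ 0)
    (ha : ∀ (i j : Fin 3), i < j → ∀ z,
      a i j z = τ (z + Pi.single i 1) * τ (z + Pi.single j 1)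
        / (τ z * τ (z + Pi.single i 1 + Pi.single j 1)))
    (hskew : ∀ i j z, a j i z = -a i j z) {i j k : Fin 3} (hij : i < j) (hik : i ≠ k)
    (hjk : j ≠ k) (z : Fin 3 → ℤ) :
    a i j (z + Pi.single k 1)
        = -a i j z / (a 0 1 z * a 1 2 z + a 1 2 z * a 2 0 z + a 2 0 z * a 0 1 z)
      ↔ miwa τ z = 0 := by
  have hD := cyclicSum_eq_miwa hτ ha hskew z
  have hA := ha i j hij z
  obtain ⟨rfl, rfl, rfl⟩ | ⟨rfl, rfl, rfl⟩ | ⟨rfl, rfl, rfl⟩ :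
      (i = 0 ∧ j = 1 ∧ k = 2) ∨ (i = 0 ∧ j = 2 ∧ k = 1) ∨ (i = 1 ∧ j = 2 ∧ k = 0) := by omega
  · have hA' : a 0 1 (z + Pi.single 2 1)
        = τ (z + Pi.single 0 1 + Pi.single 2 1) * τ (z + Pi.single 1 1 + Pi.single 2 1)
          / (τ (z + Pi.single 2 1) * τ (z + Pi.single 0 1 + Pi.single 1 1 + Pi.single 2 1)) := by
      rw [ha 0 1 hij]; ring_nf
    exact eq_neg_div_iff_of_cube (hτ _) (hτ _) (hτ _) (hτ _) (hτ _) (hτ _) (hτ _) (hτ _)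
      hA hA' hD
  · have hA' : a 0 2 (z + Pi.single 1 1)
        = τ (z + Pi.single 0 1 + Pi.single 1 1) * τ (z + Pi.single 1 1 + Pi.single 2 1)
          / (τ (z + Pi.single 1 1) * τ (z + Pi.single 0 1 + Pi.single 1 1 + Pi.single 2 1)) := by
      rw [ha 0 2 hij]; ring_nf
    exact eq_neg_div_iff_of_cube (hτ _) (hτ _) (hτ _) (hτ _) (hτ _) (hτ _) (hτ _) (hτ _)
      hA hA' (by rw [hD]; ring)
  · exact eq_neg_div_iff_of_cube (hτ _) (hτ _) (hτ _) (hτ _) (hτ _) (hτ _) (hτ _) (hτ _)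
      hA (ha 1 2 hij _) (by rw [hD]; ring)

end TauParametrization

theorem tau_parametrization_iff_bkp_general
    (τ : (Fin 3 → ℤ) → ℝ) (hτ : ∀ z, τ z ≠ 0)
    (a : Fin 3 → Fin 3 → (Fin 3 → ℤ) → ℝ)
    (ha : ∀ (i j : Fin 3), i < j → ∀ z,
      a i j z = τ (z + Pi.single i 1) * τ (z + Pi.single j 1)
        / (τ z * τ (z + Pi.single i 1 + Pi.single j 1)))
    (hskew : ∀ i j z, a j i z = - a i j z) :
    (∀ (i j k : Fin 3), i ≠ j → j ≠ k → i ≠ k → ∀ z : Fin 3 → ℤ,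
      a i j (z + Pi.single k 1)
        = - a i j z / (a i j z * a j k z + a j k z * a k i z + a k i z * a i j z))
    ↔ (∀ z : Fin 3 → ℤ,
        τ z * τ (z + Pi.single 0 1 + Pi.single 1 1 + Pi.single 2 1)
          - τ (z + Pi.single 0 1) * τ (z + Pi.single 1 1 + Pi.single 2 1)
          + τ (z + Pi.single 1 1) * τ (z + Pi.single 0 1 + Pi.single 2 1)
          - τ (z + Pi.single 2 1) * τ (z + Pi.single 0 1 + Pi.single 1 1) = 0) := by
  constructor
  · intro h z
    exact (shift_eq_neg_div_iff_miwa hτ ha hskew (i := 0) (j := 1) (k := 2) (by decide)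
      (by decide) (by decide) z).mp (h 0 1 2 (by decide) (by decide) (by decide) z)
  · intro h i j k hij hjk hik z
    rw [cyclicSum_eq_of_skew hskew hij hjk hik]
    rcases hij.lt_or_gt with hlt | hgt
    · exact (shift_eq_neg_div_iff_miwa hτ ha hskew hlt hik hjk z).mpr (h z)
    · have hji := (shift_eq_neg_div_iff_miwa hτ ha hskew hgt hjk hik z).mpr (h z)
      rw [hskew j i, hskew j i z, hji]
      ring

/-- The τ-parametrized (lexicographic) Moutard coefficients satisfy the cube
relation iff τ satisfies the discrete BKP (Miwa) equation
τ τ₁₂₃ − τ₁ τ₂₃ + τ₂ τ₁₃ − τ₃ τ₁₂ = 0. -/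
theorem tau_parametrization_iff_bkp
    (τ : (Fin 3 → ℤ) → ℝ) (hτ : ∀ z, τ z ≠ 0)
    (a : Fin 3 → Fin 3 → (Fin 3 → ℤ) → ℝ)
    (ha : ∀ (i j : Fin 3), i < j → ∀ z,
      a i j z = τ (z + Pi.single i 1) * τ (z + Pi.single j 1)
        / (τ z * τ (z + Pi.single i 1 + Pi.single j 1)))
    (hskew : ∀ i j z, a j i z = - a i j z)
    (hden : ∀ z : Fin 3 → ℤ,
      a 0 1 z * a 1 2 z + a 1 2 z * a 2 0 z + a 2 0 z * a 0 1 z ≠ 0) :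
    (∀ (i j k : Fin 3), i ≠ j → j ≠ k → i ≠ k → ∀ z : Fin 3 → ℤ,
      a i j (z + Pi.single k 1)
        = - a i j z / (a i j z * a j k z + a j k z * a k i z + a k i z * a i j z))
    ↔ (∀ z : Fin 3 → ℤ,
        τ z * τ (z + Pi.single 0 1 + Pi.single 1 1 + Pi.single 2 1)
          - τ (z + Pi.single 0 1) * τ (z + Pi.single 1 1 + Pi.single 2 1)
          + τ (z + Pi.single 1 1) * τ (z + Pi.single 0 1 + Pi.single 2 1)
          - τ (z + Pi.single 2 1) * τ (z + Pi.single 0 1 + Pi.single 1 1) = 0) :=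
  tau_parametrization_iff_bkp_general τ hτ a ha hskew
end

section
/- Let ρ : ℤ² → ℝ be nowhere-zero and a^{12} : ℤ² → ℝ nowhere-zero, and define the evolution equations ρ₁₁₂ = ρ₁₁ ρ₂ / (ρ a^{12} a^{12}₁) and ρ₁₂₂ = ρ₂₂ ρ₁ / (ρ a^{12} a^{12}₂). Then these two evolution equations are compatible: starting from values ρ, ρ₁, ρ₂, ρ₁₁, ρ₂₂, ρ₁₂ and coefficients a^{12} satisfying the equations, the two ways of computing ρ₁₁₂₂ — shifting the first equation in direction 2, or the second in direction 1 — give the same value, i.e., (ρ₁₁₂)₂ = (ρ₁₂₂)₁ modulo the evolution equations. -/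
theorem mul_div_mul_div_mul_cancel {K : Type*} [Field K] (p q r s t : K) (hq : q ≠ 0) :
    p * q / r * t / (q * s) = p * t / (r * s) :=
  calc p * q / r * t / (q * s) = p * t * q / (r * s * q) := by ring
    _ = p * t / (r * s) := mul_div_mul_right _ _ hq

theorem c1_evolution_compatible_general
    (ρ a : ℤ × ℤ → ℝ) (hρ : ∀ z, ρ z ≠ 0) :
    ∀ z : ℤ × ℤ,
      (ρ (z + (2, 0)) * ρ (z + (0, 1)) / (ρ z * (a z * a (z + (1, 0))))) * ρ (z + (0, 2))
          / (ρ (z + (0, 1)) * (a (z + (0, 1)) * a (z + (1, 1))))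
        = (ρ (z + (0, 2)) * ρ (z + (1, 0)) / (ρ z * (a z * a (z + (0, 1))))) * ρ (z + (2, 0))
          / (ρ (z + (1, 0)) * (a (z + (1, 0)) * a (z + (1, 1)))) := by
  intro z
  -- ρ₂ cancels on the left and ρ₁ on the right, leaving ρ₁₁ ρ₂₂ / (ρ a a₁ a₂ a₁₂) on both sides.
  rw [mul_div_mul_div_mul_cancel _ _ _ _ _ (hρ _), mul_div_mul_div_mul_cancel _ _ _ _ _ (hρ _)]
  ring

/-- The two evolution equations expressing the C¹-condition for a crisscrossed
A-surface are compatible: the two ways of computing ρ₁₁₂₂ agree. -/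
theorem c1_evolution_compatible
    (ρ a : ℤ × ℤ → ℝ) (hρ : ∀ z, ρ z ≠ 0) (ha : ∀ z, a z ≠ 0) :
    ∀ z : ℤ × ℤ,
      (ρ (z + (2, 0)) * ρ (z + (0, 1)) / (ρ z * (a z * a (z + (1, 0))))) * ρ (z + (0, 2))
          / (ρ (z + (0, 1)) * (a (z + (0, 1)) * a (z + (1, 1))))
        = (ρ (z + (0, 2)) * ρ (z + (1, 0)) / (ρ z * (a z * a (z + (0, 1))))) * ρ (z + (2, 0))
          / (ρ (z + (1, 0)) * (a (z + (1, 0)) * a (z + (1, 1)))) :=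
  c1_evolution_compatible_general ρ a hρ
end

section
/- Fix q : {1,…,m}² × ℤ^m → ℝ with q^{ij} = q^{ji} nowhere-zero satisfying q^{ij} q^{ij}_i = 1 for all i ≠ j (subscript i denotes shift in direction i). Then for each pair i ≠ j there exists a function α^{ij} : ℤ^m → ℝ, independent of the coordinates z_i and z_j, such that q^{ij}(z) = (α^{ij}(z))^{(−1)^{z_i + z_j}}. -/
/-!
Along a direction `i` (or `j`) the relation `q^{ij} q^{ij}_i = 1` says that a unit shift inverts
`q^{ij}`, while it also flips the parity of `z_i + z_j`. Hence `α^{ij} := (q^{ij})^{(-1)^{z_i+z_j}}`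
is invariant under unit shifts in directions `i` and `j`, so it depends only on the other
coordinates, and `q^{ij}` is recovered from it by the same involution.
-/

section ParityInv

variable {G : Type*}

/-- `parityInv n x` is `x ^ (-1) ^ n`. -/
def parityInv [Inv G] (n : ℤ) (x : G) : G := if Even n then x else x⁻¹

lemma parityInv_add_one_inv [InvolutiveInv G] (n : ℤ) (x : G) :
    parityInv (n + 1) x⁻¹ = parityInv n x := by
  by_cases h : Even n <;> simp [parityInv, h]

lemma parityInv_parityInv [InvolutiveInv G] (n : ℤ) (x : G) :
    parityInv n (parityInv n x) = x := by
  by_cases h : Even n <;> simp [parityInv, h]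

lemma parityInv_ne_zero [GroupWithZero G] (n : ℤ) {x : G} (hx : x ≠ 0) :
    parityInv n x ≠ 0 := by
  by_cases h : Even n <;> simp [parityInv, h, hx]

end ParityInv

section Lattice

variable {ι α : Type*} [DecidableEq ι] {f : (ι → ℤ) → α}

lemma apply_add_single_eq_of_forall_add_single_one {t : ι}
    (h : ∀ z, f (z + Pi.single t 1) = f z) (n : ℤ) (z : ι → ℤ) :
    f (z + Pi.single t n) = f z := by
  have hper : Function.Periodic (fun n : ℤ => f (z + Pi.single t n)) 1 := fun n => by
    simp only [Pi.single_add, ← add_assoc, h]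
  simpa using hper.int_mul n 0

lemma apply_eq_of_forall_ne_ne_eq {i j : ι}
    (hi : ∀ z, f (z + Pi.single i 1) = f z) (hj : ∀ z, f (z + Pi.single j 1) = f z)
    {z z' : ι → ℤ} (h : ∀ k, k ≠ i → k ≠ j → z k = z' k) : f z = f z' := by
  set w := z + Pi.single i (z' i - z i)
  have hz' : z' = w + Pi.single j (z' j - w j) := by
    funext k
    by_cases hkj : k = j
    · subst hkj; simp
    by_cases hki : k = i
    · subst hki; simp [w, hkj]
    · simp [w, hki, hkj, h k hki hkj]
  rw [hz', apply_add_single_eq_of_forall_add_single_one hj,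
    apply_add_single_eq_of_forall_add_single_one hi]

variable {G : Type*} [InvolutiveInv G]

lemma parityInv_add_single_one {g : (ι → ℤ) → G} {i j t : ι} (hij : i ≠ j)
    (ht : t = i ∨ t = j) (hg : ∀ z, g (z + Pi.single t 1) = (g z)⁻¹) (z : ι → ℤ) :
    parityInv ((z + Pi.single t 1 : ι → ℤ) i + (z + Pi.single t 1 : ι → ℤ) j)
        (g (z + Pi.single t 1)) =
      parityInv (z i + z j) (g z) := by
  have hsum : (z + Pi.single t 1 : ι → ℤ) i + (z + Pi.single t 1 : ι → ℤ) j = z i + z j + 1 := by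
    rcases ht with rfl | rfl
    · simp [hij.symm]; ring
    · simp [hij]; ring
  rw [hsum, hg, parityInv_add_one_inv]

end Lattice

theorem q_general_solution_general (m : ℕ)
    (q : Fin m → Fin m → (Fin m → ℤ) → ℝ)
    (hsymm : ∀ i j z, q i j z = q j i z)
    (hq : ∀ (i j : Fin m), i ≠ j → ∀ z : Fin m → ℤ,
      q i j z * q i j (z + Pi.single i 1) = 1) :
    ∀ (i j : Fin m), i ≠ j →
      ∃ α : (Fin m → ℤ) → ℝ, (∀ z, α z ≠ 0) ∧
        (∀ z z' : Fin m → ℤ, (∀ k, k ≠ i → k ≠ j → z k = z' k) → α z = α z') ∧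
        (∀ z, q i j z = if Even (z i + z j) then α z else (α z)⁻¹) := by
  intro i j hij
  have hi : ∀ z, q i j (z + Pi.single i 1) = (q i j z)⁻¹ := fun z =>
    eq_inv_of_mul_eq_one_right (hq i j hij z)
  have hj : ∀ z, q i j (z + Pi.single j 1) = (q i j z)⁻¹ := fun z => by
    simpa only [hsymm j i] using eq_inv_of_mul_eq_one_right (hq j i hij.symm z)
  set α : (Fin m → ℤ) → ℝ := fun z => parityInv (z i + z j) (q i j z)
  refine ⟨α, fun z => ?_, fun z z' h => ?_, fun z => ?_⟩
  · exact parityInv_ne_zero _ (left_ne_zero_of_mul_eq_one (hq i j hij z))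
  · exact apply_eq_of_forall_ne_ne_eq (f := α) (parityInv_add_single_one hij (.inl rfl) hi)
      (parityInv_add_single_one hij (.inr rfl) hj) h
  · exact (parityInv_parityInv (z i + z j) (q i j z)).symm

/-- General solution of q^{ij} q^{ij}_i = 1: each q^{ij} has the form
(α^{ij})^{(-1)^{z_i+z_j}} with α^{ij} independent of z_i and z_j. -/
theorem q_general_solution (m : ℕ)
    (q : Fin m → Fin m → (Fin m → ℤ) → ℝ)
    (hsymm : ∀ i j z, q i j z = q j i z)
    (hne : ∀ i j z, q i j z ≠ 0)
    (hq : ∀ (i j : Fin m), i ≠ j → ∀ z : Fin m → ℤ,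
      q i j z * q i j (z + Pi.single i 1) = 1) :
    ∀ (i j : Fin m), i ≠ j →
      ∃ α : (Fin m → ℤ) → ℝ, (∀ z, α z ≠ 0) ∧
        (∀ z z' : Fin m → ℤ, (∀ k, k ≠ i → k ≠ j → z k = z' k) → α z = α z') ∧
        (∀ z, q i j z = if Even (z i + z j) then α z else (α z)⁻¹) :=
  q_general_solution_general m q hsymm hq
end

section
/- Let ξ : ℤ³ → ℝ be nowhere-zero and satisfy ξ_i ξ_j = ξ ξ_{ij} for all i ≠ j in {1,2,3} (i.e., q^{ij} = ξ_i ξ_j / (ξ ξ_{ij}) = 1 identically). Then ξ factorizes: there exist functions f¹, f², f³ : ℤ → ℝ, each nowhere-zero, such that ξ(z₁, z₂, z₃) = f¹(z₁) f²(z₂) f³(z₃) for all (z₁,z₂,z₃) ∈ ℤ³. -/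
/-!
The equation says that the ratio `ξ (z + eᵢ) / ξ z` does not change under a unit shift in any
direction `j ≠ i`. Hence on every coordinate plane `ξ (z + a eᵢ + b eⱼ) ξ z = ξ (z + a eᵢ) ξ (z + b eⱼ)`,
and using this in the plane of `e₀, e₁` through `z₂ e₂` and in the planes of `e₂, e₀` and `e₂, e₁`
through the origin gives `ξ z · ξ 0 ^ 2 = ξ (z₀ e₀) ξ (z₁ e₁) ξ (z₂ e₂)`. The argument works in any commutative group;
`ξ` enters through its values in `ℝˣ`.
-/

theorem Function.Periodic.apply_eq_apply_zero {α : Type*} {u : ℤ → α}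
    (hu : Function.Periodic u 1) (n : ℤ) : u n = u 0 := by
  simpa using hu.int_mul_eq n

section DiscreteWave

variable {G : Type*} [CommGroup G]

theorem discreteWave_mul_eq_mul {g : ℤ → ℤ → G}
    (hg : ∀ a b, g (a + 1) b * g a (b + 1) = g a b * g (a + 1) (b + 1)) (a b : ℤ) :
    g a b * g 0 0 = g a 0 * g 0 b := by
  have hrow (a : ℤ) : Function.Periodic (fun b ↦ g (a + 1) b / g a b) 1 := fun b ↦ by
    simp only [div_eq_div_iff_mul_eq_mul]
    rw [mul_comm, ← hg, mul_comm]
  have hcol : Function.Periodic (fun a ↦ g a b / (g a 0 * g 0 b)) 1 := fun a ↦ by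
    have := (hrow a).apply_eq_apply_zero b
    simp only [div_eq_div_iff_mul_eq_mul] at this ⊢
    rw [← mul_assoc, this]
    ac_rfl
  have := hcol.apply_eq_apply_zero a
  simp only [div_eq_div_iff_mul_eq_mul] at this
  refine mul_right_cancel (b := g 0 b) ?_
  rw [mul_assoc, this]
  ac_rfl

theorem discreteWave_plane_mul_eq_mul {ι : Type*} [DecidableEq ι] {η : (ι → ℤ) → G}
    (hη : ∀ i j : ι, i ≠ j → ∀ z : ι → ℤ,
      η (z + Pi.single i 1) * η (z + Pi.single j 1) = η z * η (z + Pi.single i 1 + Pi.single j 1))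
    {i j : ι} (hij : i ≠ j) (z : ι → ℤ) (a b : ℤ) :
    η (z + Pi.single i a + Pi.single j b) * η z = η (z + Pi.single i a) * η (z + Pi.single j b) := by
  have hg (a b : ℤ) := hη i j hij (z + Pi.single i a + Pi.single j b)
  have := discreteWave_mul_eq_mul (g := fun a b ↦ η (z + Pi.single i a + Pi.single j b))
    (fun a b ↦ by simp only [Pi.single_add]; convert hg a b using 3 <;> abel) a b
  simpa only [Pi.single_zero, add_zero] using this

theorem exists_factorization_of_discreteWave {η : (Fin 3 → ℤ) → G}
    (hη : ∀ i j : Fin 3, i ≠ j → ∀ z : Fin 3 → ℤ,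
      η (z + Pi.single i 1) * η (z + Pi.single j 1) = η z * η (z + Pi.single i 1 + Pi.single j 1)) :
    ∃ f : Fin 3 → ℤ → G, ∀ z : Fin 3 → ℤ, η z = f 0 (z 0) * f 1 (z 1) * f 2 (z 2) := by
  refine ⟨![fun t ↦ η (Pi.single 0 t) * (η 0)⁻¹, fun t ↦ η (Pi.single 1 t) * (η 0)⁻¹,
    fun t ↦ η (Pi.single 2 t)], fun z ↦ ?_⟩
  set x : Fin 3 → ℤ := Pi.single 0 (z 0)
  set y : Fin 3 → ℤ := Pi.single 1 (z 1)
  set w : Fin 3 → ℤ := Pi.single 2 (z 2)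
  have hz : w + x + y = z := by
    funext k; fin_cases k <;> simp [x, y, w]
  have hxy : η z * η w = η (w + x) * η (w + y) :=
    hz ▸ discreteWave_plane_mul_eq_mul hη (by decide : (0 : Fin 3) ≠ 1) w (z 0) (z 1)
  have hwx : η (w + x) * η 0 = η w * η x := by
    simpa only [zero_add] using
      discreteWave_plane_mul_eq_mul hη (by decide : (2 : Fin 3) ≠ 0) 0 (z 2) (z 0)
  have hwy : η (w + y) * η 0 = η w * η y := by
    simpa only [zero_add] using
      discreteWave_plane_mul_eq_mul hη (by decide : (2 : Fin 3) ≠ 1) 0 (z 2) (z 1)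
  have key : η z * η 0 * η 0 = η x * η y * η w := by
    refine mul_right_cancel (b := η w) ?_
    calc η z * η 0 * η 0 * η w
        = η z * η w * η 0 * η 0 := by ac_rfl
      _ = η (w + x) * η 0 * (η (w + y) * η 0) := by rw [hxy]; ac_rfl
      _ = η x * η y * η w * η w := by rw [hwx, hwy]; ac_rfl
  simp only [Matrix.cons_val_zero, Matrix.cons_val_one, Matrix.cons_val_two, Matrix.head_cons,
    Matrix.tail_cons]
  rw [eq_mul_inv_of_mul_eq (eq_mul_inv_of_mul_eq key)]
  ac_rfl

end DiscreteWave

/-- General solution of the multiplicative discrete wave equation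
ξ_i ξ_j = ξ ξ_{ij}: the function ξ factorizes as f¹(z₁) f²(z₂) f³(z₃). -/
theorem xi_factorizes
    (ξ : (Fin 3 → ℤ) → ℝ) (hξ : ∀ z, ξ z ≠ 0)
    (h : ∀ (i j : Fin 3), i ≠ j → ∀ z : Fin 3 → ℤ,
      ξ (z + Pi.single i 1) * ξ (z + Pi.single j 1)
        = ξ z * ξ (z + Pi.single i 1 + Pi.single j 1)) :
    ∃ f : Fin 3 → ℤ → ℝ, (∀ i t, f i t ≠ 0) ∧
      ∀ z : Fin 3 → ℤ, ξ z = f 0 (z 0) * f 1 (z 1) * f 2 (z 2) := by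
  obtain ⟨f, hf⟩ := exists_factorization_of_discreteWave (η := fun z ↦ Units.mk0 (ξ z) (hξ z))
    fun i j hij z ↦ Units.ext (by simpa using h i j hij z)
  exact ⟨fun i t ↦ f i t, fun i t ↦ (f i t).ne_zero, fun z ↦ by simpa using congrArg Units.val (hf z)⟩
end

section
/- Let a : ℤ² → ℝ be positive and let Φ : ℤ² → ℝ be positive on the coordinate axes {0}×ℤ and ℤ×{0}. Suppose Φ is extended to all of ℤ² (in the quadrant ℕ×ℕ) by the evolution Φ₁₂ = a (Φ₁ + Φ₂) − Φ, and that at every lattice point the coefficient satisfies a > Φ/(Φ₁ + Φ₂). Then Φ > 0 on all of ℕ × ℕ, and consequently the coefficients a²³ = Φ/Φ₂, a³¹ = Φ/Φ₁ and a₃ = (Φ₁Φ₂/(Φ Φ₁₂)) a are all positive on ℕ × ℕ. -/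
/-!
Since `Φ₁₂ = a (Φ₁ + Φ₂) - Φ` and `Φ₁ + Φ₂ > 0`, the bound `a > Φ / (Φ₁ + Φ₂)` says exactly that
`Φ₁₂ > 0`; so positivity spreads from the axes over the quadrant one elementary square at a time.
Once `Φ > 0`, the same bound also forces `a > 0`, and the coefficients are quotients of positives.
-/

theorem Nat.quadrant_induction {P : ℕ → ℕ → Prop} (hcol : ∀ n, P 0 n) (hrow : ∀ m, P m 0)
    (hstep : ∀ m n, P (m + 1) n → P m (n + 1) → P (m + 1) (n + 1)) : ∀ m n, P m n := by
  intro m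
  induction m with
  | zero => exact hcol
  | succ m ih =>
    intro n
    induction n with
    | zero => exact hrow (m + 1)
    | succ n ihn => exact hstep m n ihn (ih (n + 1))

theorem phi_positivity_propagation_general
    (a Φ : ℕ → ℕ → ℝ)
    (haxis1 : ∀ n, 0 < Φ 0 n) (haxis2 : ∀ m, 0 < Φ m 0)
    (hev : ∀ m n, Φ (m + 1) (n + 1) = a m n * (Φ (m + 1) n + Φ m (n + 1)) - Φ m n)
    (hbound : ∀ m n, Φ m n / (Φ (m + 1) n + Φ m (n + 1)) < a m n) :
    ∀ m n, 0 < Φ m n ∧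
      0 < Φ m n / Φ m (n + 1) ∧
      0 < Φ m n / Φ (m + 1) n ∧
      0 < (Φ (m + 1) n * Φ m (n + 1) / (Φ m n * Φ (m + 1) (n + 1))) * a m n := by
  have hpos : ∀ m n, 0 < Φ m n :=
    Nat.quadrant_induction haxis1 haxis2 fun m n h₁ h₂ => by
      rw [hev, sub_pos, ← div_lt_iff₀ (add_pos h₁ h₂)]
      exact hbound m n
  have ha : ∀ m n, 0 < a m n := fun m n =>
    (div_pos (hpos m n) (add_pos (hpos (m + 1) n) (hpos m (n + 1)))).trans (hbound m n)
  intro m n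
  exact ⟨hpos m n, div_pos (hpos m n) (hpos m (n + 1)), div_pos (hpos m n) (hpos (m + 1) n),
    mul_pos (div_pos (mul_pos (hpos (m + 1) n) (hpos m (n + 1)))
      (mul_pos (hpos m n) (hpos (m + 1) (n + 1)))) (ha m n)⟩

/-- Positivity propagation for the potential Φ: if Φ is positive on the axes,
evolves by Φ₁₂ = a(Φ₁+Φ₂) − Φ, and a > Φ/(Φ₁+Φ₂) everywhere, then Φ is
positive on ℕ × ℕ and all induced Moutard coefficients are positive. -/
theorem phi_positivity_propagation
    (a Φ : ℕ → ℕ → ℝ)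
    (hapos : ∀ m n, 0 < a m n)
    (haxis1 : ∀ n, 0 < Φ 0 n) (haxis2 : ∀ m, 0 < Φ m 0)
    (hev : ∀ m n, Φ (m + 1) (n + 1) = a m n * (Φ (m + 1) n + Φ m (n + 1)) - Φ m n)
    (hbound : ∀ m n, Φ m n / (Φ (m + 1) n + Φ m (n + 1)) < a m n) :
    ∀ m n, 0 < Φ m n ∧
      0 < Φ m n / Φ m (n + 1) ∧
      0 < Φ m n / Φ (m + 1) n ∧
      0 < (Φ (m + 1) n * Φ m (n + 1) / (Φ m n * Φ (m + 1) (n + 1))) * a m n :=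
  phi_positivity_propagation_general a Φ haxis1 haxis2 hev hbound
end

section
/- Let τ : ℤ³ → ℝ be nowhere-zero and satisfy the discrete BKP equation in the form τ τ₁₂₃ − τ₁ τ₂₃ − τ₂ τ₁₃ + τ₃ τ₁₂ = 0. Define a²¹ = τ₂τ₁/(τ τ₁₂), a²³ = τ₂τ₃/(τ τ₂₃), a³¹ = τ₃τ₁/(τ τ₁₃) (and skew-symmetric counterparts a^{ji} = −a^{ij}). Then these coefficients satisfy the cube relation a^{ij}_k = −a^{ij}/(a^{ij}a^{jk} + a^{jk}a^{ki} + a^{ki}a^{ij}) for pairwise distinct i, j, k, assuming the relevant denominators are nonzero. -/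
/-!
Writing `c_{ij} = τ_i τ_j / (τ τ_{ij})`, every coefficient `a^{ij}` is `± c_{ij}`, and one checks
directly that `c_{ij}(x + e_k) · P = c_{ij}(x)` for the quantity
`P = τ_1 τ_2 τ_3 τ_{123} / (τ τ_{12} τ_{13} τ_{23})`, which is symmetric in the three directions.
The BKP equation is exactly what identifies the symmetric sum
`a^{ij} a^{jk} + a^{jk} a^{ki} + a^{ki} a^{ij}` with `-P`, so `a^{ij}_k = a^{ij} / P` is the
cube relation.
-/

section TauCoefficients

variable {M K : Type*} [AddCommMonoid M] [Field K]

def tauCoeff (τ : M → K) (u v x : M) : K := τ (x + u) * τ (x + v) / (τ x * τ (x + u + v))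

def cubeRatio (τ : M → K) (u v w x : M) : K :=
  τ (x + u) * τ (x + v) * τ (x + w) * τ (x + u + v + w) /
    (τ x * τ (x + u + v) * τ (x + u + w) * τ (x + v + w))

variable {τ : M → K}

theorem tauCoeff_comm (u v x : M) : tauCoeff τ u v x = tauCoeff τ v u x := by
  rw [tauCoeff, tauCoeff, add_right_comm x v u, mul_comm (τ (x + v))]

theorem cubeRatio_swap_left (u v w x : M) : cubeRatio τ u v w x = cubeRatio τ v u w x := by
  unfold cubeRatio
  rw [add_right_comm x v u, add_right_comm x u v]
  ring

theorem cubeRatio_swap_right (u v w x : M) : cubeRatio τ u v w x = cubeRatio τ u w v x := by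
  unfold cubeRatio
  rw [add_right_comm (x + u) w v, add_right_comm x w v]
  ring

theorem cubeRatio_fin_three (e : Fin 3 → M) {i j k : Fin 3} (hij : i ≠ j) (hjk : j ≠ k)
    (hik : i ≠ k) (x : M) :
    cubeRatio τ (e i) (e j) (e k) x = cubeRatio τ (e 0) (e 1) (e 2) x := by
  fin_cases i <;> fin_cases j <;> fin_cases k <;> simp at hij hjk hik ⊢
  · rw [cubeRatio_swap_right]
  · rw [cubeRatio_swap_left]
  · rw [cubeRatio_swap_right, cubeRatio_swap_left]
  · rw [cubeRatio_swap_left, cubeRatio_swap_right]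
  · rw [cubeRatio_swap_right, cubeRatio_swap_left, cubeRatio_swap_right]

theorem tauCoeff_shift_mul_cubeRatio (hτ : ∀ y, τ y ≠ 0) (u v w x : M) :
    tauCoeff τ u v (x + w) * cubeRatio τ u v w x = tauCoeff τ u v x := by
  unfold tauCoeff cubeRatio
  rw [add_right_comm x w u, add_right_comm x w v, add_right_comm (x + u) w v]
  field_simp [hτ]

theorem tauCoeff_cube_sum_of_bkp (hτ : ∀ y, τ y ≠ 0) {u v w x : M}
    (hbkp : τ x * τ (x + u + v + w) - τ (x + u) * τ (x + v + w) - τ (x + v) * τ (x + u + w)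
      + τ (x + w) * τ (x + u + v) = 0) :
    tauCoeff τ u w x * tauCoeff τ v w x - tauCoeff τ u v x * tauCoeff τ u w x
      - tauCoeff τ u v x * tauCoeff τ v w x = -cubeRatio τ u v w x := by
  unfold tauCoeff cubeRatio
  field_simp [hτ]
  linear_combination hbkp

end TauCoefficients

section SkewFinThree

variable {X R : Type*} [CommRing R] {a : Fin 3 → Fin 3 → X → R}

theorem exists_eq_mul_of_skew_fin_three {c : Fin 3 → Fin 3 → X → R}
    (hc : ∀ i j x, c j i x = c i j x) (hskew : ∀ i j x, a j i x = -a i j x)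
    (h10 : ∀ x, a 1 0 x = c 1 0 x) (h12 : ∀ x, a 1 2 x = c 1 2 x)
    (h20 : ∀ x, a 2 0 x = c 2 0 x) {i j : Fin 3} (hij : i ≠ j) :
    ∃ s : R, ∀ x, a i j x = s * c i j x := by
  fin_cases i <;> fin_cases j <;> simp at hij ⊢
  · exact ⟨-1, fun x => by rw [hskew 1 0, h10, hc]; ring⟩
  · exact ⟨-1, fun x => by rw [hskew 2 0, h20, hc]; ring⟩
  · exact ⟨1, fun x => by rw [h10, one_mul]⟩
  · exact ⟨1, fun x => by rw [h12, one_mul]⟩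
  · exact ⟨1, fun x => by rw [h20, one_mul]⟩
  · exact ⟨-1, fun x => by rw [hskew 1 2, h12, hc]; ring⟩

theorem cube_sum_of_skew_fin_three (hskew : ∀ i j x, a j i x = -a i j x) {i j k : Fin 3}
    (hij : i ≠ j) (hjk : j ≠ k) (hik : i ≠ k) (x : X) :
    a i j x * a j k x + a j k x * a k i x + a k i x * a i j x
      = a 2 0 x * a 1 2 x - a 1 0 x * a 2 0 x - a 1 0 x * a 1 2 x := by
  fin_cases i <;> fin_cases j <;> fin_cases k <;> simp at hij hjk hik ⊢ <;>
    simp only [hskew 0 1, hskew 2 1, hskew 0 2] <;> ring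

end SkewFinThree

/-- Lattice direction `k ∈ {0,1,2}` corresponds to the paper's direction `k+1`. -/
theorem bkp_implies_cube_relation
    (τ : (Fin 3 → ℤ) → ℝ) (hτ : ∀ z, τ z ≠ 0)
    (hbkp : ∀ z : Fin 3 → ℤ,
      τ z * τ (z + Pi.single 0 1 + Pi.single 1 1 + Pi.single 2 1)
        - τ (z + Pi.single 0 1) * τ (z + Pi.single 1 1 + Pi.single 2 1)
        - τ (z + Pi.single 1 1) * τ (z + Pi.single 0 1 + Pi.single 2 1)
        + τ (z + Pi.single 2 1) * τ (z + Pi.single 0 1 + Pi.single 1 1) = 0)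
    (a : Fin 3 → Fin 3 → (Fin 3 → ℤ) → ℝ)
    (ha21 : ∀ z, a 1 0 z = τ (z + Pi.single 1 1) * τ (z + Pi.single 0 1)
        / (τ z * τ (z + Pi.single 1 1 + Pi.single 0 1)))
    (ha23 : ∀ z, a 1 2 z = τ (z + Pi.single 1 1) * τ (z + Pi.single 2 1)
        / (τ z * τ (z + Pi.single 1 1 + Pi.single 2 1)))
    (ha31 : ∀ z, a 2 0 z = τ (z + Pi.single 2 1) * τ (z + Pi.single 0 1)
        / (τ z * τ (z + Pi.single 2 1 + Pi.single 0 1)))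
    (hskew : ∀ i j z, a j i z = - a i j z) :
    ∀ (i j k : Fin 3), i ≠ j → j ≠ k → i ≠ k → ∀ z : Fin 3 → ℤ,
      a i j z * a j k z + a j k z * a k i z + a k i z * a i j z ≠ 0 →
      a i j (z + Pi.single k 1)
        = - a i j z / (a i j z * a j k z + a j k z * a k i z + a k i z * a i j z) := by
  intro i j k hij hjk hik z hS
  let e : Fin 3 → Fin 3 → ℤ := fun i => Pi.single i 1
  have h10 : ∀ z, a 1 0 z = tauCoeff τ (e 1) (e 0) z := ha21
  have h12 : ∀ z, a 1 2 z = tauCoeff τ (e 1) (e 2) z := ha23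
  have h20 : ∀ z, a 2 0 z = tauCoeff τ (e 2) (e 0) z := ha31
  have hsum : a i j z * a j k z + a j k z * a k i z + a k i z * a i j z
      = -cubeRatio τ (e i) (e j) (e k) z := by
    rw [cube_sum_of_skew_fin_three hskew hij hjk hik, h10, h12, h20,
      cubeRatio_fin_three e hij hjk hik, tauCoeff_comm (e 1) (e 0), tauCoeff_comm (e 2) (e 0)]
    exact tauCoeff_cube_sum_of_bkp hτ (hbkp z)
  obtain ⟨s, hs⟩ := exists_eq_mul_of_skew_fin_three (c := fun i j => tauCoeff τ (e i) (e j))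
    (fun i j => tauCoeff_comm (e j) (e i)) hskew h10 h12 h20 hij
  have hshift : a i j (z + e k) * cubeRatio τ (e i) (e j) (e k) z = a i j z := by
    rw [hs, hs, mul_assoc, tauCoeff_shift_mul_cubeRatio hτ]
  rw [hsum] at hS ⊢
  rw [eq_div_iff hS, ← hshift]
  ring
end
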